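/- Let f : ℝⁿ → ℝ be convex and D-Lipschitz with D ≥ 0, and let μ > 0. If g ∈ ℝⁿ is a subgradient of the Gaussian-smoothed function f_μ at x, i.e. f_μ(z) ≥ f_μ(x) + ⟨g, z − x⟩ for all z ∈ ℝⁿ, then g is a (μ·D·√n)-subgradient of f at x, i.e. f(z) ≥ f(x) − μ·D·√n + ⟨g, z − x⟩ for all z ∈ ℝⁿ. -/

import Mathlib

open MeasureTheory ProbabilityTheory RealInnerProductSpace

/-- The standard Gaussian measure on `ℝⁿ` (Euclidean space), the product over the `n`
coordinates of the real Gaussian measure with mean 0 and variance 1. -/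
noncomputable def stdGaussian (n : ℕ) : Measure (EuclideanSpace ℝ (Fin n)) :=
  (Measure.pi fun _ : Fin n => gaussianReal 0 1).map
    (MeasurableEquiv.toLp 2 (Fin n → ℝ))

/-- The Gaussian-smoothed function of `f` with smoothing parameter `μ`. -/
noncomputable def gaussianSmoothed {n : ℕ} (f : EuclideanSpace ℝ (Fin n) → ℝ) (μ : ℝ)
    (x : EuclideanSpace ℝ (Fin n)) : ℝ :=
  ∫ ξ, f (x + μ • ξ) ∂(stdGaussian n)

/-! Jensen's inequality for the centred Gaussian gives `f ≤ f_μ`, while the Lipschitz bound gives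
`f_μ ≤ f + μ D 𝔼‖ξ‖ ≤ f + μ D √n`, because `𝔼‖ξ‖ ≤ √(𝔼‖ξ‖²) = √n`. Sandwiching the subgradient
inequality of `f_μ` between these two bounds yields the claim. -/

open Set
open scoped NNReal

lemma integral_sq_gaussianReal_zero (v : ℝ≥0) : ∫ t, t ^ 2 ∂gaussianReal 0 v = v := by
  rw [← variance_of_integral_eq_zero aemeasurable_id' integral_id_gaussianReal,
    variance_fun_id_gaussianReal]

lemma integral_norm_le_sqrt_integral_norm_sq {Ω E : Type*} [MeasurableSpace Ω]
    [NormedAddCommGroup E] {ν : Measure Ω} [IsProbabilityMeasure ν] {X : Ω → E}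
    (hX : MemLp X 2 ν) : ∫ ω, ‖X ω‖ ∂ν ≤ √(∫ ω, ‖X ω‖ ^ 2 ∂ν) := by
  have hvar := variance_eq_sub hX.norm
  simp only [Pi.pow_apply] at hvar
  apply Real.le_sqrt_of_sq_le
  linarith [variance_nonneg (fun ω => ‖X ω‖) ν]

section StdGaussian

variable {E : Type*} [NormedAddCommGroup E] [InnerProductSpace ℝ E] [FiniteDimensional ℝ E]
  [MeasurableSpace E] [BorelSpace E]

lemma integral_norm_sq_stdGaussian :
    ∫ x, ‖x‖ ^ 2 ∂ProbabilityTheory.stdGaussian E = Module.finrank ℝ E := by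
  have hnorm (x : Fin (Module.finrank ℝ E) → ℝ) :
      ‖∑ i, x i • stdOrthonormalBasis ℝ E i‖ ^ 2 = ∑ i, x i ^ 2 := by
    have h : ∑ i, x i • stdOrthonormalBasis ℝ E i
        = (stdOrthonormalBasis ℝ E).repr.symm (WithLp.toLp 2 x) :=
      OrthonormalBasis.sum_repr_symm _ _
    rw [h, LinearIsometryEquiv.norm_map, EuclideanSpace.real_norm_sq_eq]
  rw [ProbabilityTheory.stdGaussian,
    integral_map (Measurable.aemeasurable (by fun_prop)) (by fun_prop)]
  simp_rw [hnorm]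
  rw [integral_finsetSum _ fun i _ =>
    integrable_comp_eval (μ := fun _ => gaussianReal 0 1) (f := fun t : ℝ => t ^ 2)
      (memLp_id_gaussianReal 2).integrable_sq]
  simp [integral_comp_eval (μ := fun _ => gaussianReal 0 1) (f := fun t : ℝ => t ^ 2)
    (by fun_prop), integral_sq_gaussianReal_zero]

lemma integral_norm_stdGaussian_le :
    ∫ x, ‖x‖ ∂ProbabilityTheory.stdGaussian E ≤ √(Module.finrank ℝ E) := by
  simpa [integral_norm_sq_stdGaussian] using integral_norm_le_sqrt_integral_norm_sq
    (IsGaussian.memLp_two_id (μ := ProbabilityTheory.stdGaussian E))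

end StdGaussian

lemma LipschitzWith.abs_sub_comp_add_smul_le {E : Type*} [SeminormedAddCommGroup E]
    [NormedSpace ℝ E] {f : E → ℝ} {K : ℝ≥0} (hf : LipschitzWith K f) (x ξ : E) (c : ℝ) :
    |f (x + c • ξ) - f x| ≤ K * |c| * ‖ξ‖ := by
  have h := hf.dist_le_mul (x + c • ξ) x
  rwa [Real.dist_eq, dist_eq_norm, add_sub_cancel_left, norm_smul, Real.norm_eq_abs,
    ← mul_assoc] at h

section Smoothing

variable {E : Type*} [NormedAddCommGroup E] [NormedSpace ℝ E] [MeasurableSpace E]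
  {ν : Measure E} [IsProbabilityMeasure ν] {f : E → ℝ}

lemma ConvexOn.le_integral_comp_add_smul [CompleteSpace E] (hconv : ConvexOn ℝ univ f)
    (hfc : Continuous f) {x : E} {c : ℝ} (hfi : Integrable (fun ξ => f (x + c • ξ)) ν)
    (hν : Integrable id ν) (hν₀ : ∫ ξ, ξ ∂ν = 0) :
    f x ≤ ∫ ξ, f (x + c • ξ) ∂ν := by
  have hsmul : Integrable (fun ξ => c • ξ) ν := hν.smul c
  have hmean : ∫ ξ, x + c • ξ ∂ν = x := by
    rw [integral_add (integrable_const x) hsmul, integral_smul, hν₀]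
    simp
  calc f x = f (∫ ξ, x + c • ξ ∂ν) := by rw [hmean]
    _ ≤ ∫ ξ, f (x + c • ξ) ∂ν :=
      hconv.map_integral_le hfc.continuousOn isClosed_univ
        (ae_of_all _ fun _ => mem_univ _) ((integrable_const x).add hsmul) hfi

variable [OpensMeasurableSpace E] {K : ℝ≥0}

lemma LipschitzWith.integrable_comp_add_smul (hf : LipschitzWith K f)
    (hν : Integrable (‖·‖) ν) (x : E) (c : ℝ) :
    Integrable (fun ξ => f (x + c • ξ)) ν := by
  refine ((integrable_const |f x|).add (hν.const_mul (K * |c|))).mono'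
    (hf.continuous.comp (by fun_prop)).aestronglyMeasurable (ae_of_all _ fun ξ => ?_)
  have h := hf.abs_sub_comp_add_smul_le x ξ c
  simp only [Real.norm_eq_abs, Pi.add_apply]
  linarith [abs_sub_abs_le_abs_sub (f (x + c • ξ)) (f x)]

lemma LipschitzWith.integral_comp_add_smul_le (hf : LipschitzWith K f)
    (hν : Integrable (‖·‖) ν) (x : E) (c : ℝ) :
    ∫ ξ, f (x + c • ξ) ∂ν ≤ f x + K * |c| * ∫ ξ, ‖ξ‖ ∂ν := by
  have hle (ξ : E) : f (x + c • ξ) ≤ f x + K * |c| * ‖ξ‖ := by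
    linarith [le_abs_self (f (x + c • ξ) - f x), hf.abs_sub_comp_add_smul_le x ξ c]
  calc ∫ ξ, f (x + c • ξ) ∂ν ≤ ∫ ξ, f x + K * |c| * ‖ξ‖ ∂ν :=
        integral_mono (hf.integrable_comp_add_smul hν x c)
          ((integrable_const _).add (hν.const_mul _)) hle
    _ = f x + K * |c| * ∫ ξ, ‖ξ‖ ∂ν := by
        rw [integral_add (integrable_const _) (hν.const_mul _), integral_const, integral_const_mul]
        simp

end Smoothing

lemma stdGaussian_eq_stdGaussian_euclideanSpace (n : ℕ) :
    stdGaussian n = ProbabilityTheory.stdGaussian (EuclideanSpace ℝ (Fin n)) :=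
  map_pi_eq_stdGaussian

section GaussianSmoothed

variable {n : ℕ} {f : EuclideanSpace ℝ (Fin n) → ℝ} {K : ℝ≥0}

lemma ConvexOn.le_gaussianSmoothed (hconv : ConvexOn ℝ univ f) (hf : LipschitzWith K f)
    (μ : ℝ) (x : EuclideanSpace ℝ (Fin n)) : f x ≤ gaussianSmoothed f μ x := by
  rw [gaussianSmoothed, stdGaussian_eq_stdGaussian_euclideanSpace]
  exact hconv.le_integral_comp_add_smul hf.continuous
    (hf.integrable_comp_add_smul IsGaussian.integrable_id.norm x μ) IsGaussian.integrable_id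
    integral_id_stdGaussian

lemma LipschitzWith.gaussianSmoothed_le (hf : LipschitzWith K f) (μ : ℝ)
    (x : EuclideanSpace ℝ (Fin n)) : gaussianSmoothed f μ x ≤ f x + K * |μ| * √n := by
  rw [gaussianSmoothed, stdGaussian_eq_stdGaussian_euclideanSpace]
  calc _ ≤ f x + K * |μ| * ∫ ξ, ‖ξ‖ ∂ProbabilityTheory.stdGaussian (EuclideanSpace ℝ (Fin n)) :=
        hf.integral_comp_add_smul_le IsGaussian.integrable_id.norm x μ
    _ ≤ f x + K * |μ| * √n := by
        gcongr
        simpa using integral_norm_stdGaussian_le (E := EuclideanSpace ℝ (Fin n))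

end GaussianSmoothed

theorem stmt4_general (n : ℕ) (f : EuclideanSpace ℝ (Fin n) → ℝ) (D : ℝ) (hD : 0 ≤ D)
    (hconv : ConvexOn ℝ Set.univ f)
    (hlip : ∀ x y : EuclideanSpace ℝ (Fin n), |f x - f y| ≤ D * ‖x - y‖)
    (μ : ℝ) (hμ : 0 < μ)
    (x g : EuclideanSpace ℝ (Fin n))
    (hsub : ∀ z : EuclideanSpace ℝ (Fin n),
      gaussianSmoothed f μ z ≥ gaussianSmoothed f μ x + ⟪g, z - x⟫) :
    ∀ z : EuclideanSpace ℝ (Fin n),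
      f z ≥ f x - μ * D * Real.sqrt n + ⟪g, z - x⟫ := by
  have hf : LipschitzWith (Real.toNNReal D) f := LipschitzWith.of_dist_le' fun a b => by
    rw [Real.dist_eq, dist_eq_norm]; exact hlip a b
  intro z
  have hsmooth_le := hf.gaussianSmoothed_le μ z
  rw [Real.coe_toNNReal D hD, abs_of_pos hμ] at hsmooth_le
  linarith [hconv.le_gaussianSmoothed hf μ x, hsub z]

theorem stmt4 (n : ℕ) (hn : 1 ≤ n) (f : EuclideanSpace ℝ (Fin n) → ℝ) (D : ℝ) (hD : 0 ≤ D)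
    (hconv : ConvexOn ℝ Set.univ f)
    (hlip : ∀ x y : EuclideanSpace ℝ (Fin n), |f x - f y| ≤ D * ‖x - y‖)
    (μ : ℝ) (hμ : 0 < μ)
    (x g : EuclideanSpace ℝ (Fin n))
    (hsub : ∀ z : EuclideanSpace ℝ (Fin n),
      gaussianSmoothed f μ z ≥ gaussianSmoothed f μ x + ⟪g, z - x⟫) :
    ∀ z : EuclideanSpace ℝ (Fin n),
      f z ≥ f x - μ * D * Real.sqrt n + ⟪g, z - x⟫ :=
  stmt4_general n f D hD hconv hlip μ hμ x g hsub
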